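/- arXiv:1808.03189 — 4 statements merged into one kernel-verified Lean document; each statement's English description precedes it below -/
import Mathlib

section
/- Let I ⊆ S = K[x_1,...,x_n] be a monomial ideal and suppose there exists an integer s ≥ 1 such that the integral closure of I^k equals I^{k-s} · (integral closure of I^s) for all k ≥ s. Then for every integer k ≥ 1, the k-th power of the integral closure of I^s equals the integral closure of I^{ks}. -/
/-!
An element `f` is integral over `J ^ a` exactly when `f t ^ a` is integral over the Rees algebra
`R[J t]` (here `reesAlgebra J ⊆ R[X]` with `t = X`, so `f t ^ a` is `monomial a f`). Since
integral elements form a ring, `\overline{J ^ a} * \overline{J ^ b} ⊆ \overline{J ^ (a + b)}`.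
For `B = \overline{I ^ s}` the hypothesis then yields
`B ^ 2 ⊆ \overline{I ^ (2 s)} = I ^ s * B ⊆ B ^ 2`, and `B ^ 2 = I ^ s * B` iterates to
`B ^ k = I ^ ((k - 1) s) * B = \overline{I ^ (k s)}`.
-/

open MvPolynomial

def IsIntegralOverIdeal {R : Type*} [CommRing R] (I : Ideal R) (f : R) : Prop :=
  ∃ k : ℕ, 0 < k ∧ ∃ c : ℕ → R, (∀ i ∈ Finset.Icc 1 k, c i ∈ I ^ i) ∧
    f ^ k + ∑ i ∈ Finset.Icc 1 k, c i * f ^ (k - i) = 0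

/-- `Ibar` is the integral closure of the ideal `I`. -/
def IsIntClosureOf {R : Type*} [CommRing R] (I Ibar : Ideal R) : Prop :=
  ∀ f, f ∈ Ibar ↔ IsIntegralOverIdeal I f

/-- An ideal of `K[x_1,…,x_n]` generated by monomials. -/
def IsMonomialIdeal {n : ℕ} {K : Type*} [Field K] (I : Ideal (MvPolynomial (Fin n) K)) : Prop :=
  ∃ A : Set (Fin n →₀ ℕ),
    I = Ideal.span ((fun d => (monomial d 1 : MvPolynomial (Fin n) K)) '' A)

theorem pow_succ_eq_pow_mul_of_mul_self_eq {M : Type*} [Monoid M] {b j : M} (h : b * b = j * b)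
    (k : ℕ) : b ^ (k + 1) = j ^ k * b := by
  induction k with
  | zero => rw [pow_one, pow_zero, one_mul]
  | succ k ih => rw [pow_succ, ih, mul_assoc, h, ← mul_assoc, ← pow_succ]

namespace Polynomial

variable {R : Type*} [CommRing R] {J : Ideal R} {a : ℕ} {f : R}

theorem isIntegral_monomial_of_isIntegralOverIdeal (h : IsIntegralOverIdeal (J ^ a) f) :
    IsIntegral (reesAlgebra J) (monomial a f) := by
  obtain ⟨m, hm, c, hc, heq⟩ := h
  have hmem (i : ℕ) (hi : i ∈ Finset.Icc 1 m) : monomial (a * i) (c i) ∈ reesAlgebra J :=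
    reesAlgebra.monomial_mem.mpr (pow_mul J a i ▸ hc i hi)
  let lower : (reesAlgebra J)[X] :=
    ∑ i ∈ (Finset.Icc 1 m).attach, C ⟨_, hmem i i.2⟩ * X ^ (m - i)
  have hlower : lower.degree < m := by
    rw [← mem_degreeLT]
    refine Submodule.sum_mem _ fun i _ => mem_degreeLT.mpr ?_
    exact (degree_C_mul_X_pow_le _ _).trans_lt
      (by exact_mod_cast Nat.sub_lt hm (Finset.mem_Icc.mp i.2).1)
  refine ⟨X ^ m + lower, monic_X_pow_add hlower, ?_⟩
  have hterm (i : ℕ) (hi : i ∈ Finset.Icc 1 m) :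
      monomial (a * i) (c i) * monomial a f ^ (m - i) = monomial (a * m) (c i * f ^ (m - i)) := by
    rw [monomial_pow, monomial_mul_monomial, ← mul_add, Nat.add_sub_cancel' (Finset.mem_Icc.mp hi).2]
  rw [← aeval_def]
  simp only [lower, map_add, map_pow, aeval_X, map_sum, map_mul, aeval_C,
    Subalgebra.algebraMap_apply]
  rw [Finset.sum_attach (Finset.Icc 1 m) fun i => monomial (a * i) (c i) * monomial a f ^ (m - i),
    Finset.sum_congr rfl hterm, ← map_sum, monomial_pow, ← map_add, heq, map_zero]

/-- The coefficient of `t ^ (a d)` in an integral equation of degree `d` for `f t ^ a` over `R[J t]`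
is an integral equation for `f` over `J ^ a`. -/
theorem isIntegralOverIdeal_of_isIntegral_monomial (h : IsIntegral (reesAlgebra J) (monomial a f)) :
    IsIntegralOverIdeal (J ^ a) f := by
  obtain ⟨q, hq, heval⟩ := h
  set d := q.natDegree
  rcases Nat.eq_zero_or_pos d with hd | hd
  · have : Subsingleton R := by
      rw [hq.natDegree_eq_zero.mp hd, eval₂_one] at heval
      exact subsingleton_iff_zero_eq_one.mp (by simpa using congrArg (coeff · 0) heval.symm)
    exact ⟨1, one_pos, 0, fun _ _ => zero_mem _, Subsingleton.elim _ _⟩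
  let c (i : ℕ) : R := (q.coeff (d - i) : R[X]).coeff (a * i)
  refine ⟨d, hd, c, fun i _ => pow_mul J a i ▸ (q.coeff (d - i)).2 (a * i), ?_⟩
  have hcoeff :
      ∑ j ∈ Finset.range (d + 1), (q.coeff j : R[X]).coeff (a * (d - j)) * f ^ j = 0 := by
    have := congrArg (coeff · (a * d)) heval
    simp only [eval₂_eq_sum_range, finsetSum_coeff, monomial_pow, coeff_zero] at this
    rw [← this]
    refine Finset.sum_congr rfl fun j hj => ?_
    rw [Subalgebra.algebraMap_apply, ← coeff_mul_monomial, ← mul_add,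
      Nat.sub_add_cancel (Finset.mem_range_succ_iff.mp hj)]
  rw [Finset.sum_range_succ, Nat.sub_self, mul_zero, ← leadingCoeff, hq.leadingCoeff] at hcoeff
  rw [← hcoeff, add_comm]
  simp only [OneMemClass.coe_one, coeff_one_zero, one_mul, add_left_inj]
  refine Finset.sum_nbij' (d - ·) (d - ·) ?_ ?_ ?_ ?_ ?_ <;>
    intro i hi <;> simp only [Finset.mem_Icc, Finset.mem_range] at hi ⊢
  any_goals omega
  rw [Nat.sub_sub_self hi.2]

theorem isIntegralOverIdeal_pow_iff_isIntegral_monomial :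
    IsIntegralOverIdeal (J ^ a) f ↔ IsIntegral (reesAlgebra J) (monomial a f) :=
  ⟨isIntegral_monomial_of_isIntegralOverIdeal, isIntegralOverIdeal_of_isIntegral_monomial⟩

end Polynomial

namespace IsIntegralOverIdeal

variable {R : Type*} [CommRing R]

theorem of_mem {J : Ideal R} {f : R} (hf : f ∈ J) : IsIntegralOverIdeal J f := by
  refine ⟨1, one_pos, fun _ => -f, fun i hi => ?_, by simp⟩
  rw [Finset.Icc_self, Finset.mem_singleton] at hi
  rw [hi, pow_one]
  exact J.neg_mem hf

theorem pow_add_mul {J : Ideal R} {a b : ℕ} {f g : R} (hf : IsIntegralOverIdeal (J ^ a) f)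
    (hg : IsIntegralOverIdeal (J ^ b) g) : IsIntegralOverIdeal (J ^ (a + b)) (f * g) := by
  rw [Polynomial.isIntegralOverIdeal_pow_iff_isIntegral_monomial] at hf hg ⊢
  rw [← Polynomial.monomial_mul_monomial]
  exact hf.mul hg

end IsIntegralOverIdeal

namespace IsIntClosureOf

variable {R : Type*} [CommRing R]

theorem le {I Ibar : Ideal R} (h : IsIntClosureOf I Ibar) : I ≤ Ibar :=
  fun f hf => (h f).mpr (.of_mem hf)

theorem mul_le {J A B C : Ideal R} {a b : ℕ} (hA : IsIntClosureOf (J ^ a) A)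
    (hB : IsIntClosureOf (J ^ b) B) (hC : IsIntClosureOf (J ^ (a + b)) C) : A * B ≤ C :=
  Ideal.mul_le.mpr fun f hf g hg => (hC _).mpr (((hA f).mp hf).pow_add_mul ((hB g).mp hg))

end IsIntClosureOf

theorem pow_intClosure_eq_general {n : ℕ} {K : Type*} [Field K]
    (I : Ideal (MvPolynomial (Fin n) K))
    (s : ℕ)
    (bar : ℕ → Ideal (MvPolynomial (Fin n) K))
    (hbar : ∀ k, IsIntClosureOf (I ^ k) (bar k))
    (hst : ∀ k, s ≤ k → bar k = I ^ (k - s) * bar s) :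
    ∀ k, 1 ≤ k → (bar s) ^ k = bar (k * s) := by
  have hsq : bar s * bar s = I ^ s * bar s := by
    refine le_antisymm ?_ (Ideal.mul_mono_left (hbar s).le)
    calc bar s * bar s ≤ bar (s + s) := (hbar s).mul_le (hbar s) (hbar (s + s))
      _ = I ^ s * bar s := by rw [hst _ le_add_self, Nat.add_sub_cancel]
  intro k hk
  obtain ⟨k, rfl⟩ := Nat.exists_eq_add_of_le' hk
  rw [pow_succ_eq_pow_mul_of_mul_self_eq hsq, hst _ (Nat.le_mul_of_pos_left s k.succ_pos),
    Nat.succ_mul, Nat.add_sub_cancel, pow_mul']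

/-- if `\overline{I^k} = I^{k-s}·\overline{I^s}` for all `k ≥ s`, then
`(\overline{I^s})^k = \overline{I^{ks}}` for every `k ≥ 1`. -/
theorem pow_intClosure_eq {n : ℕ} {K : Type*} [Field K]
    (I : Ideal (MvPolynomial (Fin n) K)) (hI : IsMonomialIdeal I)
    (s : ℕ) (hs : 1 ≤ s)
    (bar : ℕ → Ideal (MvPolynomial (Fin n) K))
    (hbar : ∀ k, IsIntClosureOf (I ^ k) (bar k))
    (hst : ∀ k, s ≤ k → bar k = I ^ (k - s) * bar s) :
    ∀ k, 1 ≤ k → (bar s) ^ k = bar (k * s) :=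
  pow_intClosure_eq_general I s bar hbar hst
end

section
/- Let I be a monomial ideal in S = K[x_1,...,x_n] and suppose J ⊆ I is an ideal such that \overline{I^{ℓ}} = J · \overline{I^{ℓ-1}} for some integer ℓ ≥ 1, where m = μ(\overline{I^{ℓ-1}}) is the number of minimal monomial generators of \overline{I^{ℓ-1}}. If u is a monomial in the integral closure \overline{I} of I, then there exists an integer t with 1 ≤ t ≤ m such that u^t ∈ I^t. -/
open MvPolynomial

def IsMono {n : ℕ} {K : Type*} [Field K] (u : MvPolynomial (Fin n) K) : Prop :=
  ∃ d : Fin n →₀ ℕ, u = monomial d 1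

/-- `G` is the (unique) minimal monomial generating set of the monomial ideal `J`. -/
def IsMinimalMonomialGens {n : ℕ} {K : Type*} [Field K] (G : Finset (Fin n →₀ ℕ))
    (J : Ideal (MvPolynomial (Fin n) K)) : Prop :=
  Ideal.span ((fun d => (monomial d 1 : MvPolynomial (Fin n) K)) '' ↑G) = J ∧
    ∀ d ∈ G, (monomial d 1 : MvPolynomial (Fin n) K) ∉
      Ideal.span ((fun e => (monomial e 1 : MvPolynomial (Fin n) K)) '' ↑(G.erase d))

/-!
Products of integral elements are integral over the product ideal (pass to the Rees algebra, where
`x` integral over `I ^ a` becomes `x t ^ a` integral over `R[I t]`), so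
`u · \overline{I^{ℓ-1}} ⊆ \overline{I^ℓ} = J · \overline{I^{ℓ-1}} ⊆ I · \overline{I^{ℓ-1}}`.
The determinant trick on `\overline{I^{ℓ-1}}`, which has at most `m` generators and contains a
nonzero element, gives a monic `p` of degree at most `m` with `p_k ∈ I^{deg p - k}` and `p(u) = 0`.
Since `u` is a monomial, the coefficient of `u^{deg p}` in `p(u)` involves only the coefficient of
`u^{deg p - k}` in `p_k`; as the leading term contributes `1`, one of these is nonzero for some
`k < deg p`, and a monomial ideal contains every monomial in the support of its elements.
-/

open scoped Polynomial

namespace IsIntegralOverIdeal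

variable {R : Type*} [CommRing R] {I : Ideal R} {x : R}

theorem of_mem_s3 (hx : x ∈ I) : IsIntegralOverIdeal I x :=
  ⟨1, one_pos, fun _ => -x, by simp [hx], by simp⟩

theorem isNilpotent (h : IsIntegralOverIdeal ⊥ x) : IsNilpotent x := by
  obtain ⟨k, -, c, hc, heq⟩ := h
  refine ⟨k, ?_⟩
  rwa [Finset.sum_eq_zero fun i hi => ?_, add_zero] at heq
  have hi0 : i ≠ 0 := by have := (Finset.mem_Icc.mp hi).1; omega
  have hci : c i = 0 := by simpa [Ideal.bot_pow hi0] using hc i hi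
  rw [hci, zero_mul]

theorem exists_monic_coeff_mem_pow_eval_eq_zero (h : IsIntegralOverIdeal I x) :
    ∃ p : R[X], p.Monic ∧ (∀ j, p.coeff j ∈ I ^ (p.natDegree - j)) ∧ p.eval x = 0 := by
  obtain ⟨k, -, c, hc, heq⟩ := h
  set q : R[X] := ∑ i ∈ Finset.Icc 1 k, Polynomial.C (c i) * Polynomial.X ^ (k - i)
  have hq : q.degree < k := by
    refine (Polynomial.degree_lt_iff_coeff_zero _ _).mpr fun m hm => ?_
    refine (Polynomial.finsetSum_coeff _ _ _).trans (Finset.sum_eq_zero fun i hi => ?_)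
    have := Finset.mem_Icc.mp hi
    rw [Polynomial.coeff_C_mul_X_pow, if_neg (by omega)]
  have hdeg : (Polynomial.X ^ k + q).natDegree ≤ k :=
    Polynomial.natDegree_add_le_of_degree_le (Polynomial.natDegree_X_pow_le k)
      (Polynomial.natDegree_le_of_degree_le hq.le)
  refine ⟨Polynomial.X ^ k + q, Polynomial.monic_X_pow_add hq, fun j => ?_,
    by simpa [q, Polynomial.eval_finsetSum] using heq⟩
  refine Ideal.pow_le_pow_right (Nat.sub_le_sub_right hdeg j) ?_
  rw [Polynomial.coeff_add, Polynomial.coeff_X_pow, Polynomial.finsetSum_coeff]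
  refine Ideal.add_mem _ ?_ (Ideal.sum_mem _ fun i hi => ?_)
  · split_ifs with hj <;> simp [hj]
  · rw [Polynomial.coeff_C_mul_X_pow]
    split_ifs with hj
    · rw [hj, Nat.sub_sub_self (Finset.mem_Icc.mp hi).2]; exact hc i hi
    · exact zero_mem _

theorem of_monic_of_eval_eq_zero {p : R[X]} (hp : p.Monic)
    (hcoeff : ∀ j, p.coeff j ∈ I ^ (p.natDegree - j)) (hx : p.eval x = 0) :
    IsIntegralOverIdeal I x := by
  set k := p.natDegree
  rcases Nat.eq_zero_or_pos k with hk | hk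
  · have : Subsingleton R := subsingleton_of_zero_eq_one <| by
      rwa [(hp.natDegree_eq_zero).mp hk, Polynomial.eval_one, eq_comm] at hx
    exact of_mem_s3 (Subsingleton.elim x 0 ▸ I.zero_mem)
  refine ⟨k, hk, fun i => p.coeff (k - i), fun i hi => ?_, ?_⟩
  · simpa [Nat.sub_sub_self (Finset.mem_Icc.mp hi).2] using hcoeff (k - i)
  rw [Polynomial.eval_eq_sum_range, Finset.sum_range_succ, hp.coeff_natDegree, one_mul,
    add_comm] at hx
  rw [← hx]
  congr 1
  refine Finset.sum_nbij' (k - ·) (k - ·) ?_ ?_ ?_ ?_ ?_ <;> intro i hi <;>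
    simp only [Finset.mem_Icc, Finset.mem_range] at hi ⊢ <;> omega

theorem isIntegral_C_mul_X_pow {a : ℕ} (h : IsIntegralOverIdeal (I ^ a) x) :
    IsIntegral (reesAlgebra I) (Polynomial.C x * Polynomial.X ^ a) := by
  obtain ⟨p, hp, hcoeff, hx⟩ := h.exists_monic_coeff_mem_pow_eval_eq_zero
  -- `P(Y) = X ^ (a * deg p) * p(Y / X ^ a)`, with coefficients `p_j X ^ (a (deg p - j)) ∈ R[I t]`.
  set P : R[X][X] := (p.map Polynomial.C).scaleRoots (Polynomial.X ^ a)
  have hlifts : P ∈ Polynomial.lifts (algebraMap (reesAlgebra I) R[X]) := by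
    refine (Polynomial.lifts_iff_coeff_lifts P).mpr fun j => ⟨⟨P.coeff j, ?_⟩, rfl⟩
    rw [Polynomial.coeff_scaleRoots, Polynomial.coeff_map, Polynomial.natDegree_map_eq_of_injective
      (Polynomial.C_injective), ← pow_mul, Polynomial.C_mul_X_pow_eq_monomial]
    exact reesAlgebra.monomial_mem.mpr (by rw [pow_mul]; exact hcoeff j)
  obtain ⟨Q, hQP, -, hQ⟩ := Polynomial.lifts_and_natDegree_eq_and_monic hlifts
    ((Polynomial.monic_scaleRoots_iff _).mpr (hp.map _))
  refine ⟨Q, hQ, ?_⟩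
  rw [Polynomial.eval₂_eq_eval_map, hQP]
  have h0 : (p.map Polynomial.C).eval₂ (RingHom.id _) (Polynomial.C x) = 0 := by
    rw [Polynomial.eval₂_id, Polynomial.eval_map_apply, hx, map_zero]
  have := Polynomial.scaleRoots_eval₂_eq_zero (RingHom.id _) h0 (s := Polynomial.X ^ a)
  rwa [Polynomial.eval₂_id, RingHom.id_apply, mul_comm] at this

theorem of_isIntegral_C_mul_X_pow {a : ℕ}
    (h : IsIntegral (reesAlgebra I) (Polynomial.C x * Polynomial.X ^ a)) :
    IsIntegralOverIdeal (I ^ a) x := by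
  obtain ⟨q, hq, e⟩ := h
  set n := q.natDegree
  -- `p(x)` is the coefficient of `X ^ (a * n)` in `q(x X ^ a) = 0`.
  set p : R[X] := ∑ i ∈ Finset.range (n + 1),
    Polynomial.monomial i ((q.coeff i : R[X]).coeff (a * (n - i)))
  have hcoeff : ∀ j, p.coeff j = if j ≤ n then (q.coeff j : R[X]).coeff (a * (n - j)) else 0 := by
    intro j
    simp [p, Polynomial.finsetSum_coeff, Polynomial.coeff_monomial]
  have hdeg : p.natDegree ≤ n :=
    Polynomial.natDegree_le_iff_coeff_eq_zero.mpr fun j hj => by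
      rw [hcoeff, if_neg (by omega)]
  have hp : p.Monic := Polynomial.monic_of_natDegree_le_of_coeff_eq_one n hdeg <| by
    rw [hcoeff, if_pos le_rfl, Nat.sub_self, mul_zero, hq.coeff_natDegree]
    exact Polynomial.coeff_one_zero
  refine of_monic_of_eval_eq_zero hp
    (fun j => Ideal.pow_le_pow_right (Nat.sub_le_sub_right hdeg j) ?_) ?_
  · rw [hcoeff, ← pow_mul]
    split_ifs
    · exact (q.coeff j).2 _
    · exact zero_mem _
  · rw [Polynomial.eval_finsetSum, ← Polynomial.coeff_zero (a * n), ← e,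
      Polynomial.eval₂_eq_sum_range, Polynomial.finsetSum_coeff]
    refine Finset.sum_congr rfl fun i hi => ?_
    have hi : i ≤ n := Nat.lt_succ_iff.mp (Finset.mem_range.mp hi)
    rw [Polynomial.eval_monomial, mul_pow, ← Polynomial.C_pow, ← pow_mul, ← mul_assoc,
      Polynomial.coeff_mul_X_pow', if_pos (Nat.mul_le_mul_left a hi), Polynomial.coeff_mul_C,
      Nat.mul_sub]
    rfl

theorem mul {y : R} {a b : ℕ} (hx : IsIntegralOverIdeal (I ^ a) x)
    (hy : IsIntegralOverIdeal (I ^ b) y) : IsIntegralOverIdeal (I ^ (a + b)) (x * y) := by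
  have h : Polynomial.C (x * y) * Polynomial.X ^ (a + b) =
      Polynomial.C x * Polynomial.X ^ a * (Polynomial.C y * Polynomial.X ^ b) := by
    rw [Polynomial.C_mul, pow_add]
    ring
  exact of_isIntegral_C_mul_X_pow <| h ▸ hx.isIntegral_C_mul_X_pow.mul hy.isIntegral_C_mul_X_pow

end IsIntegralOverIdeal

theorem Ideal.exists_monic_coeff_mem_pow_eval_mul_eq_zero {R : Type*} [CommRing R]
    {I N : Ideal R} [Module.Finite R N] {u : R} (hu : ∀ x ∈ N, u * x ∈ I * N) :
    ∃ p : R[X], p.Monic ∧ p.natDegree = N.spanFinrank ∧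
      (∀ k, p.coeff k ∈ I ^ (p.natDegree - k)) ∧ ∀ x ∈ N, p.eval u * x = 0 := by
  have hrange : LinearMap.range (algebraMap R (Module.End R N) u) ≤ I • ⊤ := by
    rintro _ ⟨x, rfl⟩
    exact (Submodule.mem_smul_top_iff I N _).mpr (hu x x.2)
  obtain ⟨p, hp, hdeg, hcoeff, hzero⟩ :=
    LinearMap.exists_monic_and_natDegree_eq_and_coeff_mem_pow_and_aeval_eq_zero R _ I hrange
  refine ⟨p, hp, hdeg.trans (Submodule.spanFinrank_top N), hcoeff, fun x hx => ?_⟩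
  have := congr(($hzero ⟨x, hx⟩ : R))
  rwa [Polynomial.aeval_algebraMap_apply] at this

theorem IsMinimalMonomialGens.spanFinrank_le {n : ℕ} {K : Type*} [Field K]
    {G : Finset (Fin n →₀ ℕ)} {J : Ideal (MvPolynomial (Fin n) K)}
    (hG : IsMinimalMonomialGens G J) : J.spanFinrank ≤ G.card := by
  rw [← hG.1]
  exact (Submodule.spanFinrank_span_le_ncard_of_finite (G.finite_toSet.image _)).trans
    ((Set.ncard_image_le G.finite_toSet).trans (Set.ncard_coe_finset G).le)

namespace IsMonomialIdeal

open scoped Pointwise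

variable {n : ℕ} {K : Type*} [Field K] {I J : Ideal (MvPolynomial (Fin n) K)}

theorem monomial_mem_of_mem_support (hI : IsMonomialIdeal I) {f : MvPolynomial (Fin n) K}
    (hf : f ∈ I) {d : Fin n →₀ ℕ} (hd : d ∈ f.support) : monomial d 1 ∈ I := by
  obtain ⟨A, rfl⟩ := hI
  rw [mem_ideal_span_monomial_image] at hf ⊢
  intro e he
  exact Finset.mem_singleton.mp (support_monomial_subset he) ▸ hf d hd

theorem mul (hI : IsMonomialIdeal I) (hJ : IsMonomialIdeal J) : IsMonomialIdeal (I * J) := by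
  obtain ⟨A, rfl⟩ := hI
  obtain ⟨B, rfl⟩ := hJ
  refine ⟨A + B, ?_⟩
  rw [Ideal.span_mul_span']
  congr 1
  ext f
  simp [Set.mem_mul, Set.mem_add, monomial_mul]

theorem pow (hI : IsMonomialIdeal I) (t : ℕ) : IsMonomialIdeal (I ^ t) := by
  induction t with
  | zero => exact ⟨{0}, by simp⟩
  | succ t ih => exact pow_succ I t ▸ ih.mul hI

theorem exists_pow_mem_pow_of_eval_eq_zero (hI : IsMonomialIdeal I) {d : Fin n →₀ ℕ}
    {p : (MvPolynomial (Fin n) K)[X]} (hp : p.Monic)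
    (hcoeff : ∀ k, p.coeff k ∈ I ^ (p.natDegree - k)) (he : p.eval (monomial d 1) = 0) :
    ∃ t, 1 ≤ t ∧ t ≤ p.natDegree ∧ (monomial d 1 : MvPolynomial (Fin n) K) ^ t ∈ I ^ t := by
  classical
  set m := p.natDegree
  have hsum : ∑ k ∈ Finset.range (m + 1), coeff ((m - k) • d) (p.coeff k) = 0 := by
    have := congr(coeff (m • d) $he)
    rw [Polynomial.eval_eq_sum_range, coeff_sum, coeff_zero] at this
    rw [← this]
    refine Finset.sum_congr rfl fun k hk => ?_
    have hkm : k ≤ m := Finset.mem_range_succ_iff.mp hk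
    rw [monomial_pow, one_pow, show m • d = (m - k) • d + k • d by
      rw [← add_smul, Nat.sub_add_cancel hkm], coeff_mul_monomial, mul_one]
  rw [Finset.sum_range_succ, Nat.sub_self, zero_smul, hp.coeff_natDegree, coeff_zero_one]
    at hsum
  obtain ⟨k, hk, hne⟩ : ∃ k ∈ Finset.range m, coeff ((m - k) • d) (p.coeff k) ≠ 0 :=
    Finset.exists_ne_zero_of_sum_ne_zero <| by
      rw [eq_neg_of_add_eq_zero_left hsum]
      exact neg_ne_zero.mpr one_ne_zero
  have hk := Finset.mem_range.mp hk
  refine ⟨m - k, by omega, by omega, ?_⟩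
  rw [monomial_pow, one_pow]
  exact (hI.pow _).monomial_mem_of_mem_support (hcoeff k) (mem_support_iff.mpr hne)

end IsMonomialIdeal

/-- if `\overline{I^ℓ} = J·\overline{I^{ℓ-1}}` with `J ⊆ I` and `m` is the
number of minimal monomial generators of `\overline{I^{ℓ-1}}`, then for every monomial
`u ∈ \overline{I}` there is `1 ≤ t ≤ m` with `u^t ∈ I^t`. -/
theorem exists_pow_mem_of_intClosure {n : ℕ} {K : Type*} [Field K]
    (I J : Ideal (MvPolynomial (Fin n) K)) (hI : IsMonomialIdeal I)
    (ℓ : ℕ) (hℓ : 1 ≤ ℓ) (hJI : J ≤ I)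
    (barl barlm1 barI : Ideal (MvPolynomial (Fin n) K))
    (h1 : IsIntClosureOf (I ^ ℓ) barl)
    (h2 : IsIntClosureOf (I ^ (ℓ - 1)) barlm1)
    (h3 : IsIntClosureOf I barI)
    (hfac : barl = J * barlm1)
    (G : Finset (Fin n →₀ ℕ)) (hG : IsMinimalMonomialGens G barlm1)
    (u : MvPolynomial (Fin n) K) (hu : IsMono u) (huI : u ∈ barI) :
    ∃ t : ℕ, 1 ≤ t ∧ t ≤ G.card ∧ u ^ t ∈ I ^ t := by
  obtain ⟨d, rfl⟩ := hu
  have hIbot : I ≠ ⊥ := by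
    rintro rfl
    exact one_ne_zero (monomial_eq_zero.mp ((h3 _).mp huI).isNilpotent.eq_zero)
  obtain ⟨z, hz, hz0⟩ := Submodule.exists_mem_ne_zero_of_ne_bot hIbot
  have hmul : ∀ x ∈ barlm1, monomial d 1 * x ∈ I * barlm1 := fun x hx => by
    have hux := (pow_one I ▸ (h3 _).mp huI).mul ((h2 x).mp hx)
    rw [Nat.add_sub_cancel' hℓ] at hux
    exact Ideal.mul_mono_left hJI (hfac ▸ (h1 _).mpr hux)
  obtain ⟨p, hp, hdeg, hcoeff, hkill⟩ := Ideal.exists_monic_coeff_mem_pow_eval_mul_eq_zero hmul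
  have heval : p.eval (monomial d 1) = 0 := by
    have hw : z ^ (ℓ - 1) ∈ barlm1 := (h2 _).mpr (.of_mem (Ideal.pow_mem_pow hz _))
    exact (mul_eq_zero.mp (hkill _ hw)).resolve_right (pow_ne_zero _ hz0)
  obtain ⟨t, ht1, htp, ht⟩ := hI.exists_pow_mem_pow_of_eval_eq_zero hp hcoeff heval
  exact ⟨t, ht1, htp.trans (hdeg ▸ hG.spanFinrank_le), ht⟩
end

section
/- Let I be an integrally closed monomial ideal in S = K[x_1,...,x_n], i.e., I equals its integral closure. Then for every integer m ≥ 1 and every monomial prime ideal P, if P is an associated prime of S/I then P is an associated prime of S/I^m. -/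
open MvPolynomial

/-!
Write `P = (I : f)` and let `g₁, …, gₛ` generate `J = I ^ (m - 1)`. Each `(I ^ m : f gᵢ)` contains
`P`, since `P f gᵢ ⊆ I J = I ^ m`. Their intersection is `((I ^ m : J) : f)`, and `(I ^ m : J) = I`:
if `x J ⊆ I J`, the determinant trick makes `x` integral over `I`, so `x ∈ I`. Hence the
intersection is `P`, and as `P` is prime one of the `(I ^ m : f gᵢ)` equals `P`.
-/

section IntegralOverIdeal

variable {R : Type*} [CommRing R] {I : Ideal R}

theorem isIntegralOverIdeal_of_eval_eq_zero [Nontrivial R] {p : Polynomial R} (hp : p.Monic)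
    (hcoeff : ∀ k, p.coeff k ∈ I ^ (p.natDegree - k)) {x : R} (hx : p.eval x = 0) :
    IsIntegralOverIdeal I x := by
  set d := p.natDegree
  have hd : 0 < d := hp.natDegree_pos.mpr (by rintro rfl; simp at hx)
  refine ⟨d, hd, fun i ↦ p.coeff (d - i), fun i hi ↦ ?_, ?_⟩
  · simpa [Nat.sub_sub_self (Finset.mem_Icc.mp hi).2] using hcoeff (d - i)
  · have hreflect : ∑ i ∈ Finset.Icc 1 d, p.coeff (d - i) * x ^ (d - i)
        = ∑ i ∈ Finset.range d, p.coeff i * x ^ i :=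
      Finset.sum_nbij' (d - ·) (d - ·)
        (by intro i; simp only [Finset.mem_Icc, Finset.mem_range]; omega)
        (by intro i; simp only [Finset.mem_Icc, Finset.mem_range]; omega)
        (by intro i; simp only [Finset.mem_Icc]; omega)
        (by intro i; simp only [Finset.mem_range]; omega) (fun _ _ ↦ rfl)
    rw [hp.as_sum] at hx
    simpa [hreflect, Polynomial.eval_finsetSum] using hx

variable [IsDomain R]

theorem isIntegralOverIdeal_of_forall_mul_mem_mul {J : Ideal R} [Module.Finite R J]
    (hJ : J ≠ ⊥) {x : R} (hx : ∀ y ∈ J, x * y ∈ I * J) : IsIntegralOverIdeal I x := by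
  set φ : Module.End R J := algebraMap R (Module.End R J) x
  have hrange : LinearMap.range φ ≤ I • ⊤ := by
    rintro _ ⟨y, rfl⟩
    exact (Submodule.mem_smul_top_iff I J _).mpr (hx y y.2)
  obtain ⟨p, hp, -, hcoeff, hpφ⟩ :=
    LinearMap.exists_monic_and_natDegree_eq_and_coeff_mem_pow_and_aeval_eq_zero R φ I hrange
  refine isIntegralOverIdeal_of_eval_eq_zero hp hcoeff ?_
  obtain ⟨y, hyJ, hy⟩ := Submodule.exists_mem_ne_zero_of_ne_bot hJ
  have hpy : p.eval x * y = 0 := by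
    have := congrArg (fun ψ : Module.End R J ↦ ((ψ ⟨y, hyJ⟩ : J) : R)) hpφ
    simpa [φ, Polynomial.aeval_algebraMap_apply] using this
  exact (mul_eq_zero.mp hpy).resolve_right hy

theorem colon_pow_le_of_isIntegrallyClosed [IsNoetherianRing R]
    (hic : ∀ f, IsIntegralOverIdeal I f → f ∈ I) (hI : I ≠ ⊥) (k : ℕ) :
    (I ^ (k + 1)).colon ((I ^ k : Ideal R) : Set R) ≤ I := by
  intro z hz
  refine hic z (isIntegralOverIdeal_of_forall_mul_mem_mul (pow_ne_zero k hI) fun y hy ↦ ?_)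
  rw [← pow_succ']
  simpa using Submodule.mem_colon.mp hz y hy

end IntegralOverIdeal

namespace Ideal

variable {R : Type*} [CommRing R]

theorem isAssociatedPrime_quotient_iff [IsNoetherianRing R] {P I : Ideal R} :
    IsAssociatedPrime P (R ⧸ I) ↔ P.IsPrime ∧ ∃ f, P = I.colon {f} := by
  rw [isAssociatedPrime_iff, Quotient.mk_surjective.exists]
  suffices ∀ f : R, (⊥ : Submodule R (R ⧸ I)).colon {Quotient.mk I f} = I.colon {f} by
    simp only [this]
  intro f
  ext r
  simp [Submodule.mem_colon_singleton, Algebra.smul_def, ← map_mul,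
    Quotient.eq_zero_iff_mem]

theorem exists_eq_colon_mul_of_colon_le {P I Q J : Ideal R} [hP : P.IsPrime] (hJ : J.FG)
    {f : R} (hPf : P = I.colon {f}) (hIJ : I * J ≤ Q) (hQJ : Q.colon (J : Set R) ≤ I) :
    ∃ g ∈ J, P = Q.colon {f * g} := by
  obtain ⟨s, rfl⟩ := hJ
  have hle : ∀ g ∈ span (s : Set R), P ≤ Q.colon {f * g} := fun g hg r hr ↦ by
    rw [hPf, Submodule.mem_colon_singleton, smul_eq_mul] at hr
    rw [Submodule.mem_colon_singleton, smul_eq_mul, ← mul_assoc]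
    exact hIJ (mul_mem_mul hr hg)
  have hinf : s.inf (fun g ↦ Q.colon {f * g}) ≤ P := fun z hz ↦ by
    have hzf : z * f ∈ Q.colon (span (s : Set R) : Set R) := by
      rw [colon_span, Submodule.mem_colon]
      intro g hg
      simpa [mul_assoc] using Submodule.mem_finsetInf.mp hz g hg
    rw [hPf, Submodule.mem_colon_singleton, smul_eq_mul]
    exact hQJ hzf
  obtain ⟨g, hgs, hg⟩ := hP.inf_le'.mp hinf
  exact ⟨g, subset_span hgs, le_antisymm (hle g (subset_span hgs)) hg⟩

theorem isAssociatedPrime_quotient_pow [IsDomain R] [IsNoetherianRing R] {P I : Ideal R}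
    (hic : ∀ f, IsIntegralOverIdeal I f → f ∈ I) {m : ℕ} (hm : 1 ≤ m)
    (hass : IsAssociatedPrime P (R ⧸ I)) : IsAssociatedPrime P (R ⧸ I ^ m) := by
  obtain ⟨hPp, f, hPf⟩ := isAssociatedPrime_quotient_iff.mp hass
  rcases eq_or_ne I ⊥ with rfl | hI
  · rwa [Submodule.bot_pow (by omega)]
  obtain ⟨k, rfl⟩ := Nat.exists_eq_add_of_le' hm
  obtain ⟨g, -, hg⟩ := exists_eq_colon_mul_of_colon_le (IsNoetherian.noetherian _) hPf
    (pow_succ' I k).ge (colon_pow_le_of_isIntegrallyClosed hic hI k)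
  exact isAssociatedPrime_quotient_iff.mpr ⟨hPp, f * g, hg⟩

end Ideal

theorem ass_subset_ass_pow_general {n : ℕ} {K : Type*} [Field K]
    (I : Ideal (MvPolynomial (Fin n) K))
    (hic : ∀ f, IsIntegralOverIdeal I f → f ∈ I)
    (P : Ideal (MvPolynomial (Fin n) K))
    (m : ℕ) (hm : 1 ≤ m)
    (hass : IsAssociatedPrime P (MvPolynomial (Fin n) K ⧸ I)) :
    IsAssociatedPrime P (MvPolynomial (Fin n) K ⧸ I ^ m) :=
  Ideal.isAssociatedPrime_quotient_pow hic hm hass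

/-- if `I` is an integrally closed monomial ideal, then every monomial
prime `P` associated to `S/I` is associated to `S/I^m` for all `m ≥ 1`. -/
theorem ass_subset_ass_pow {n : ℕ} {K : Type*} [Field K]
    (I : Ideal (MvPolynomial (Fin n) K)) (hI : IsMonomialIdeal I)
    (hic : ∀ f, IsIntegralOverIdeal I f → f ∈ I)
    (P : Ideal (MvPolynomial (Fin n) K)) (hP : IsMonomialIdeal P) (hPp : P.IsPrime)
    (m : ℕ) (hm : 1 ≤ m)
    (hass : IsAssociatedPrime P (MvPolynomial (Fin n) K ⧸ I)) :
    IsAssociatedPrime P (MvPolynomial (Fin n) K ⧸ I ^ m) :=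
  ass_subset_ass_pow_general I hic P m hm hass
end

section
/- Let I ⊆ S = K[x_1,...,x_n] be a monomial ideal, let x_1 be a variable, and set S_1 = K[x_2,...,x_n], I_1 = I ∩ S_1 and I_1' = (I : x_1). Then as K-vector spaces, I decomposes as the direct sum of I_1 and x_1·I_1', and consequently sdepth_S(I) ≥ min{sdepth_{S_1}(I_1), sdepth_S(I_1')}. -/
open MvPolynomial

def InCone {n : ℕ} (p : (Fin n →₀ ℕ) × Finset (Fin n)) (d : Fin n →₀ ℕ) : Prop :=
  ∃ e : Fin n →₀ ℕ, (e.support : Set (Fin n)) ⊆ ↑p.2 ∧ d = p.1 + e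

/-- A Stanley decomposition of `I/J` over the polynomial subring on the variables in
`V`: the cones `x^a·K[Z]` with `Z ⊆ V` partition the monomials of `I \ J` supported
in `V`. -/
def IsSDecompOn {n : ℕ} {K : Type*} [Field K] (V : Finset (Fin n))
    (I J : Ideal (MvPolynomial (Fin n) K))
    (D : Finset ((Fin n →₀ ℕ) × Finset (Fin n))) : Prop :=
  (∀ p ∈ D, p.2 ⊆ V) ∧
    (∀ d : Fin n →₀ ℕ,
      (d.support ⊆ V ∧ (monomial d 1 : MvPolynomial (Fin n) K) ∈ I ∧
        (monomial d 1 : MvPolynomial (Fin n) K) ∉ J) ↔ ∃ p ∈ D, InCone p d) ∧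
    (∀ p ∈ D, ∀ q ∈ D, ∀ d, InCone p d → InCone q d → p = q)

/-- Stanley depth of `I/J` over the polynomial subring on the variables in `V`. -/
noncomputable def sdepthOn {n : ℕ} (K : Type*) [Field K] (V : Finset (Fin n))
    (I J : Ideal (MvPolynomial (Fin n) K)) : ℕ∞ :=
  ⨆ D : {D : Finset ((Fin n →₀ ℕ) × Finset (Fin n)) // IsSDecompOn V I J D},
    ⨅ p : ↥D.1, ((p.1.2.card : ℕ∞))


/-!
A monomial of `I` either avoids `x_i`, and then lies in `I₁`, or is `x_i` times a monomial of
`(I : x_i)`; polynomials supported on these two kinds of exponents have disjoint supports.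
The same dichotomy glues Stanley decompositions: the cones of a decomposition of `I₁` over
`K[x_j : j ≠ i]`, together with the cones of a decomposition of `(I : x_i)` translated by `x_i`,
partition the monomials of `I`, and translation does not change the dimension of a cone.
-/

namespace IsMonomialIdeal

variable {n : ℕ} {K : Type*} [Field K] {I : Ideal (MvPolynomial (Fin n) K)}

theorem mem_iff_forall_monomial_mem (hI : IsMonomialIdeal I) {f : MvPolynomial (Fin n) K} :
    f ∈ I ↔ ∀ d ∈ f.support, monomial d 1 ∈ I := by
  obtain ⟨A, rfl⟩ := hI
  simp [mem_ideal_span_monomial_image]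

theorem restrictScalars_eq_restrictSupport (hI : IsMonomialIdeal I) :
    I.restrictScalars K = restrictSupport K {d | monomial d 1 ∈ I} := by
  ext f
  exact hI.mem_iff_forall_monomial_mem

end IsMonomialIdeal

theorem MvPolynomial.X_mul_monomial_tsub_single {σ R : Type*} [CommSemiring R] {i : σ}
    {d : σ →₀ ℕ} (hd : d i ≠ 0) (r : R) :
    X i * monomial (d - Finsupp.single i 1) r = monomial d r := by
  rw [X, monomial_mul, one_mul, add_tsub_cancel_of_le]
  exact Finsupp.single_le_iff.mpr (Nat.one_le_iff_ne_zero.mpr hd)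

theorem MvPolynomial.map_mulLeft_X_le_restrictSupport {σ R : Type*} [CommSemiring R] (i : σ)
    (M : Submodule R (MvPolynomial σ R)) :
    M.map (LinearMap.mulLeft R (X i)) ≤ restrictSupport R {d | d i ≠ 0} := by
  rintro _ ⟨g, -, rfl⟩
  simp [mem_restrictSupport_iff, Set.subset_def]

theorem MvPolynomial.monomial_mem_colon_span_X_iff {σ R : Type*} [CommRing R]
    {I : Ideal (MvPolynomial σ R)} {i : σ} {e : σ →₀ ℕ} :
    monomial e 1 ∈ I.colon (Ideal.span {X i} : Ideal (MvPolynomial σ R)) ↔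
      monomial (e + Finsupp.single i 1) 1 ∈ I := by
  rw [Ideal.mem_colon_span_singleton, X, monomial_mul, one_mul]

theorem MvPolynomial.disjoint_restrictSupport {σ R : Type*} [CommSemiring R]
    {s t : Set (σ →₀ ℕ)} (h : Disjoint s t) :
    Disjoint (restrictSupport R s) (restrictSupport R t) := by
  rw [Submodule.disjoint_def]
  intro p hs ht
  rw [mem_restrictSupport_iff] at hs ht
  exact support_eq_empty.mp (Finset.coe_eq_empty.mp (Set.subset_empty_iff.mp (h hs ht)))

section Splitting

variable {n : ℕ} {K : Type*} [Field K] {I : Ideal (MvPolynomial (Fin n) K)} (i : Fin n)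

theorem span_monomials_avoiding_le_restrictSupport :
    Submodule.span K {m : MvPolynomial (Fin n) K | ∃ d : Fin n →₀ ℕ,
      d i = 0 ∧ monomial d 1 ∈ I ∧ m = monomial d 1} ≤ restrictSupport K {d | d i = 0} := by
  rw [Submodule.span_le]
  rintro _ ⟨d, hd, -, rfl⟩
  simp [hd]

theorem disjoint_span_monomials_avoiding_map_mulLeft_X
    (M : Submodule K (MvPolynomial (Fin n) K)) :
    Disjoint
      (Submodule.span K {m : MvPolynomial (Fin n) K | ∃ d : Fin n →₀ ℕ,
        d i = 0 ∧ monomial d 1 ∈ I ∧ m = monomial d 1})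
      (M.map (LinearMap.mulLeft K (X i))) :=
  (disjoint_restrictSupport (Set.disjoint_left.mpr fun _ h h' => absurd h h')).mono
    (span_monomials_avoiding_le_restrictSupport i) (map_mulLeft_X_le_restrictSupport i M)

theorem IsMonomialIdeal.restrictScalars_eq_span_sup_map_colon (hI : IsMonomialIdeal I) :
    I.restrictScalars K =
      Submodule.span K {m : MvPolynomial (Fin n) K | ∃ d : Fin n →₀ ℕ,
        d i = 0 ∧ monomial d 1 ∈ I ∧ m = monomial d 1} ⊔
      ((I.colon (Ideal.span {X i} : Ideal (MvPolynomial (Fin n) K))).restrictScalars K).map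
        (LinearMap.mulLeft K (X i)) := by
  apply le_antisymm
  · rw [hI.restrictScalars_eq_restrictSupport, restrictSupport_eq_span, Submodule.span_le]
    rintro _ ⟨d, hdI, rfl⟩
    by_cases hdi : d i = 0
    · exact Submodule.mem_sup_left (Submodule.subset_span ⟨d, hdi, hdI, rfl⟩)
    · refine Submodule.mem_sup_right
        ⟨monomial (d - Finsupp.single i 1) 1, ?_, X_mul_monomial_tsub_single hdi 1⟩
      rwa [SetLike.mem_coe, Submodule.restrictScalars_mem, Ideal.mem_colon_span_singleton,
        mul_comm, X_mul_monomial_tsub_single hdi]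
  · refine sup_le ?_ ?_
    · rw [Submodule.span_le]
      rintro _ ⟨d, -, hdI, rfl⟩
      exact hdI
    · rintro _ ⟨g, hg, rfl⟩
      rw [LinearMap.mulLeft_apply, Submodule.restrictScalars_mem, mul_comm]
      exact Ideal.mem_colon_span_singleton.mp hg

end Splitting

section StanleyDecomposition

variable {n : ℕ} {K : Type*} [Field K]

theorem inCone_add_iff {a c d : Fin n →₀ ℕ} {Z : Finset (Fin n)} :
    InCone (a + c, Z) d ↔ c ≤ d ∧ InCone (a, Z) (d - c) := by
  constructor
  · rintro ⟨e, he, rfl⟩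
    exact ⟨le_add_self.trans le_self_add, e, he, by rw [add_right_comm, add_tsub_cancel_right]⟩
  · rintro ⟨hc, e, he, hde⟩
    exact ⟨e, he, by rw [← tsub_add_cancel_of_le hc, hde, add_right_comm]⟩

theorem IsSDecompOn.mem_of_inCone {V : Finset (Fin n)} {I J : Ideal (MvPolynomial (Fin n) K)}
    {D : Finset ((Fin n →₀ ℕ) × Finset (Fin n))} (hD : IsSDecompOn V I J D)
    {p : (Fin n →₀ ℕ) × Finset (Fin n)} (hp : p ∈ D) {d : Fin n →₀ ℕ} (hd : InCone p d) :
    d.support ⊆ V ∧ monomial d (1 : K) ∈ I ∧ monomial d (1 : K) ∉ J :=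
  (hD.2.1 d).2 ⟨p, hp, hd⟩

theorem IsSDecompOn.union_image_shift {I I1 I1' : Ideal (MvPolynomial (Fin n) K)} {i : Fin n}
    (hI1 : ∀ d : Fin n →₀ ℕ, d i = 0 → (monomial d (1 : K) ∈ I1 ↔ monomial d 1 ∈ I))
    (hI1' : ∀ e : Fin n →₀ ℕ,
      monomial e (1 : K) ∈ I1' ↔ monomial (e + Finsupp.single i 1) 1 ∈ I)
    {D1 D2 : Finset ((Fin n →₀ ℕ) × Finset (Fin n))}
    (h1 : IsSDecompOn (Finset.univ.erase i) I1 ⊥ D1) (h2 : IsSDecompOn Finset.univ I1' ⊥ D2) :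
    IsSDecompOn Finset.univ I ⊥ (D1 ∪ D2.image fun p => (p.1 + Finsupp.single i 1, p.2)) := by
  have hsupp (d : Fin n →₀ ℕ) : d.support ⊆ Finset.univ.erase i ↔ d i = 0 := by
    simp [Finset.subset_iff, not_imp_comm]
  have hxi (d : Fin n →₀ ℕ) : Finsupp.single i 1 ≤ d ↔ d i ≠ 0 := by
    simp [Finsupp.single_le_iff, Nat.one_le_iff_ne_zero]
  refine ⟨fun _ _ => Finset.subset_univ _, fun d => ?_, ?_⟩
  · have hcover : (∃ p ∈ D1 ∪ D2.image fun p => (p.1 + Finsupp.single i 1, p.2), InCone p d) ↔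
        (∃ p ∈ D1, InCone p d) ∨
          (Finsupp.single i 1 ≤ d ∧ ∃ p ∈ D2, InCone p (d - Finsupp.single i 1)) := by
      simp only [Finset.mem_union, or_and_right, exists_or, Finset.exists_mem_image,
        inCone_add_iff, Prod.mk.eta, and_left_comm (a := _ ∈ D2), exists_and_left]
    rw [hcover, ← h1.2.1, ← h2.2.1]
    simp only [Finset.subset_univ, true_and, hsupp, hxi, Ideal.mem_bot, monomial_eq_zero,
      one_ne_zero, not_false_eq_true, and_true, hI1']
    by_cases hdi : d i = 0
    · simp [hdi, hI1 d hdi]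
    · simp [hdi, tsub_add_cancel_of_le ((hxi d).2 hdi)]
  · have hD1 {p d} (hp : p ∈ D1) (hd : InCone p d) : d i = 0 :=
      (hsupp d).1 (h1.mem_of_inCone hp hd).1
    have hD2 {p : (Fin n →₀ ℕ) × Finset (Fin n)} {d}
        (hd : InCone (p.1 + Finsupp.single i 1, p.2) d) : d i ≠ 0 :=
      (hxi d).1 (inCone_add_iff.1 hd).1
    rintro p hp q hq d hpd hqd
    simp only [Finset.mem_union, Finset.mem_image] at hp hq
    rcases hp with hp | ⟨p, hp, rfl⟩ <;> rcases hq with hq | ⟨q, hq, rfl⟩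
    · exact h1.2.2 p hp q hq d hpd hqd
    · exact absurd (hD1 hp hpd) (hD2 hqd)
    · exact absurd (hD1 hq hqd) (hD2 hpd)
    · rw [h2.2.2 p hp q hq _ (inCone_add_iff.1 hpd).2 (inCone_add_iff.1 hqd).2]

theorem le_sdepthOn {V : Finset (Fin n)} {I J : Ideal (MvPolynomial (Fin n) K)}
    {D : Finset ((Fin n →₀ ℕ) × Finset (Fin n))} (hD : IsSDecompOn V I J D) :
    ⨅ p : D, (p.1.2.card : ℕ∞) ≤ sdepthOn K V I J :=
  le_iSup (fun D : {D // IsSDecompOn V I J D} => ⨅ p : D.1, (p.1.2.card : ℕ∞)) ⟨D, hD⟩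

theorem min_sdepthOn_le_sdepthOn {I I1 I1' : Ideal (MvPolynomial (Fin n) K)} {i : Fin n}
    (hI1 : ∀ d : Fin n →₀ ℕ, d i = 0 → (monomial d (1 : K) ∈ I1 ↔ monomial d 1 ∈ I))
    (hI1' : ∀ e : Fin n →₀ ℕ,
      monomial e (1 : K) ∈ I1' ↔ monomial (e + Finsupp.single i 1) 1 ∈ I) :
    min (sdepthOn K (Finset.univ.erase i) I1 ⊥) (sdepthOn K Finset.univ I1' ⊥) ≤
      sdepthOn K Finset.univ I ⊥ := by
  rw [sdepthOn, sdepthOn, iSup_inf_iSup]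
  refine iSup_le fun ⟨⟨D1, h1⟩, ⟨D2, h2⟩⟩ =>
    le_trans ?_ (le_sdepthOn (h1.union_image_shift hI1 hI1' h2))
  refine le_iInf fun ⟨p, hp⟩ => ?_
  rcases Finset.mem_union.mp hp with hp | hp
  · exact inf_le_left.trans (iInf_le _ (⟨p, hp⟩ : D1))
  · obtain ⟨q, hq, rfl⟩ := Finset.mem_image.mp hp
    exact inf_le_right.trans (iInf_le _ (⟨q, hq⟩ : D2))

end StanleyDecomposition

/-- writing `I₁ = I ∩ S₁` (the monomials of `I` not involving `x_i`)
and `I₁' = (I : x_i)`, the ideal `I` decomposes as a `K`-vector space as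
`I = I₁ ⊕ x_i·I₁'`, and `sdepth_S I ≥ min { sdepth_{S₁} I₁, sdepth_S I₁' }`. -/
theorem sdepth_splitting {n : ℕ} {K : Type*} [Field K]
    (I : Ideal (MvPolynomial (Fin n) K)) (hI : IsMonomialIdeal I) (i : Fin n)
    (I1 : Ideal (MvPolynomial (Fin n) K))
    (hI1 : I1 = Ideal.span {m : MvPolynomial (Fin n) K | ∃ d : Fin n →₀ ℕ,
      d i = 0 ∧ (monomial d 1 : MvPolynomial (Fin n) K) ∈ I ∧ m = monomial d 1})
    (I1' : Ideal (MvPolynomial (Fin n) K))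
    (hI1' : I1' = I.colon ((Ideal.span {X i} : Ideal (MvPolynomial (Fin n) K)) : Set (MvPolynomial (Fin n) K))) :
    (Submodule.restrictScalars K I =
        Submodule.span K {m : MvPolynomial (Fin n) K | ∃ d : Fin n →₀ ℕ,
          d i = 0 ∧ (monomial d 1 : MvPolynomial (Fin n) K) ∈ I ∧ m = monomial d 1} ⊔
        Submodule.map (LinearMap.mulLeft K (X i : MvPolynomial (Fin n) K))
          (Submodule.restrictScalars K I1') ∧
      Disjoint
        (Submodule.span K {m : MvPolynomial (Fin n) K | ∃ d : Fin n →₀ ℕ,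
          d i = 0 ∧ (monomial d 1 : MvPolynomial (Fin n) K) ∈ I ∧ m = monomial d 1})
        (Submodule.map (LinearMap.mulLeft K (X i : MvPolynomial (Fin n) K))
          (Submodule.restrictScalars K I1'))) ∧
    min (sdepthOn K (Finset.univ.erase i) I1 ⊥) (sdepthOn K Finset.univ I1' ⊥) ≤
      sdepthOn K Finset.univ I ⊥ := by
  subst hI1 hI1'
  have hI1_le : Ideal.span {m : MvPolynomial (Fin n) K | ∃ d : Fin n →₀ ℕ,
      d i = 0 ∧ monomial d 1 ∈ I ∧ m = monomial d 1} ≤ I := by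
    rw [Ideal.span_le]
    rintro _ ⟨d, -, hdI, rfl⟩
    exact hdI
  refine ⟨⟨hI.restrictScalars_eq_span_sup_map_colon i,
    disjoint_span_monomials_avoiding_map_mulLeft_X i _⟩, ?_⟩
  exact min_sdepthOn_le_sdepthOn
    (fun d hd => ⟨(hI1_le ·), fun hdI => Ideal.subset_span ⟨d, hd, hdI, rfl⟩⟩)
    fun _ => monomial_mem_colon_span_X_iff
end
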